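/- Let u ∈ (S²)ⁿ with ∑ rᵢ uⁱ = 0, and suppose the diagonal vector d_{i,j}(u) = ∑_{k=i}^{j-1} r_k u^k is collinear with d_{i,k}(u) = ∑_{ℓ=i}^{k-1} r_ℓ u^ℓ where i < j < k: say d_{i,k}(u) = α d_{i,j}(u) = β d_{j,k}(u) with α, β ∈ ℝ. Then the bending vector fields satisfy α X_{i,j}(u) + β X_{j,k}(u) = X_{i,k}(u), where X_{a,b}(u) is the n-tuple whose m-th component is d_{a,b}(u) × u^m for a ≤ m ≤ b−1 and 0 otherwise. -/

import Mathlib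

open Matrix Finset

/-- The diagonal vector `d_{a,b}(u) = ∑_{k=a}^{b-1} r_k u^k` of the polygon `u`. -/
noncomputable def diag (r : ℕ → ℝ) (u : ℕ → Fin 3 → ℝ) (a b : ℕ) : Fin 3 → ℝ :=
  ∑ k ∈ Finset.Ico a b, r k • u k

/-- The bending vector field associated to the diagonal `d_{a,b}`:
its `m`-th component is `d_{a,b}(u) × u^m` for `a ≤ m ≤ b-1` and `0` otherwise. -/
noncomputable def bending (r : ℕ → ℝ) (u : ℕ → Fin 3 → ℝ) (a b : ℕ) (m : ℕ) : Fin 3 → ℝ :=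
  if a ≤ m ∧ m < b then (diag r u a b) ⨯₃ u m else 0

section Bending

variable (r : ℕ → ℝ) (u : ℕ → Fin 3 → ℝ) {a b m : ℕ}

lemma bending_of_mem (ham : a ≤ m) (hmb : m < b) :
    bending r u a b m = diag r u a b ⨯₃ u m :=
  if_pos ⟨ham, hmb⟩

lemma bending_of_lt (hma : m < a) : bending r u a b m = 0 :=
  if_neg fun h => (h.1.trans_lt hma).false

lemma bending_of_le (hbm : b ≤ m) : bending r u a b m = 0 :=
  if_neg fun h => (h.2.trans_le hbm).false

lemma smul_bending_of_mem (c : ℝ) (ham : a ≤ m) (hmb : m < b) :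
    c • bending r u a b m = (c • diag r u a b) ⨯₃ u m := by
  rw [bending_of_mem r u ham hmb, LinearMap.map_smul₂]

end Bending

theorem bending_relation_of_degenerate_face_general
    (r : ℕ → ℝ)
    (u : ℕ → Fin 3 → ℝ)
    (i j k : ℕ) (hij : i < j) (hjk : j < k)
    (α β : ℝ)
    (hα : diag r u i k = α • diag r u i j)
    (hβ : diag r u i k = β • diag r u j k) :
    ∀ m, α • bending r u i j m + β • bending r u j k m = bending r u i k m := by
  intro m
  rcases lt_or_ge m i with hmi | him
  · rw [bending_of_lt r u hmi, bending_of_lt r u (hmi.trans hij), bending_of_lt r u hmi,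
      smul_zero, smul_zero, add_zero]
  rcases lt_or_ge m j with hmj | hjm
  · rw [smul_bending_of_mem r u α him hmj, ← hα, bending_of_lt r u hmj,
      bending_of_mem r u him (hmj.trans hjk), smul_zero, add_zero]
  rcases lt_or_ge m k with hmk | hkm
  · rw [smul_bending_of_mem r u β hjm hmk, ← hβ, bending_of_le r u hjm,
      bending_of_mem r u him hmk, smul_zero, zero_add]
  · rw [bending_of_le r u hjm, bending_of_le r u hkm, bending_of_le r u hkm,
      smul_zero, smul_zero, add_zero]

/-- If the diagonals of a degenerate face satisfy `d_{i,k}(u) = α d_{i,j}(u) = β d_{j,k}(u)`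
with `i < j < k`, then the bending vector fields satisfy
`α X_{i,j}(u) + β X_{j,k}(u) = X_{i,k}(u)`. -/
theorem bending_relation_of_degenerate_face (n : ℕ)
    (r : ℕ → ℝ) (hr : ∀ m ∈ Finset.Icc 1 n, 0 < r m)
    (u : ℕ → Fin 3 → ℝ) (hu : ∀ m ∈ Finset.Icc 1 n, u m ⬝ᵥ u m = 1)
    (hclose : ∑ m ∈ Finset.Icc 1 n, r m • u m = 0)
    (i j k : ℕ) (hi : 1 ≤ i) (hij : i < j) (hjk : j < k) (hkn : k ≤ n)
    (α β : ℝ)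
    (hα : diag r u i k = α • diag r u i j)
    (hβ : diag r u i k = β • diag r u j k) :
    ∀ m, α • bending r u i j m + β • bending r u j k m = bending r u i k m :=
  bending_relation_of_degenerate_face_general r u i j k hij hjk α β hα hβ
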